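/- arXiv:2306.00538 — 3 statements merged into one kernel-verified Lean document; each statement's English description precedes it below -/
import Mathlib

section
/- Let Σ be a p×p positive definite real symmetric matrix, Δ ∈ ℝ^p, and let A' ⊆ A ⊆ {1,…,p} be index sets. Denote by Σ_A the principal submatrix of Σ indexed by A and Δ_A the corresponding subvector. Then Δ_{A'}ᵀ (Σ_{A'})⁻¹ Δ_{A'} ≤ Δ_Aᵀ (Σ_A)⁻¹ Δ_A. -/
/-!
Completing the square gives the variational formula
`xᵀ M⁻¹ x = max_y (2 yᵀx - yᵀ M y)` for positive definite `M`. Restricting `M` and `x` to a set of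
coordinates amounts to taking the maximum only over vectors `y` supported on that set, which can
only decrease it.
-/

open Matrix

namespace Matrix

variable {m n : Type*} [Fintype n] [DecidableEq n]

theorem PosDef.two_mul_dotProduct_sub_le {M : Matrix n n ℝ} (hM : M.PosDef) (x y : n → ℝ) :
    2 * (y ⬝ᵥ x) - y ⬝ᵥ (M *ᵥ y) ≤ x ⬝ᵥ (M⁻¹ *ᵥ x) := by
  set u := M⁻¹ *ᵥ x
  have hMu : M *ᵥ u = x := by
    rw [mulVec_mulVec, mul_nonsing_inv _ ((isUnit_iff_isUnit_det M).1 hM.isUnit), one_mulVec]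
  have hMt : Mᵀ = M := by simpa using hM.isHermitian.eq
  have hsymm : u ⬝ᵥ (M *ᵥ y) = y ⬝ᵥ x := by
    rw [← hMt, dotProduct_transpose_mulVec, hMu]
  have hnonneg : 0 ≤ (y - u) ⬝ᵥ (M *ᵥ (y - u)) := by
    simpa using hM.posSemidef.dotProduct_mulVec_nonneg (y - u)
  rw [mulVec_sub, sub_dotProduct, dotProduct_sub, dotProduct_sub, hsymm, hMu,
    dotProduct_comm u x] at hnonneg
  linarith

theorem PosDef.dotProduct_inv_transpose_mul_mul_le [Fintype m] [DecidableEq m]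
    {M : Matrix n n ℝ} (hM : M.PosDef) (P : Matrix n m ℝ) (hN : IsUnit (Pᵀ * M * P).det)
    (x : n → ℝ) :
    (Pᵀ *ᵥ x) ⬝ᵥ ((Pᵀ * M * P)⁻¹ *ᵥ (Pᵀ *ᵥ x)) ≤ x ⬝ᵥ (M⁻¹ *ᵥ x) := by
  set N := Pᵀ * M * P
  set z := N⁻¹ *ᵥ (Pᵀ *ᵥ x)
  have hNz : N *ᵥ z = Pᵀ *ᵥ x := by rw [mulVec_mulVec, mul_nonsing_inv _ hN, one_mulVec]
  have hzx : z ⬝ᵥ (Pᵀ *ᵥ x) = (P *ᵥ z) ⬝ᵥ x := by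
    rw [dotProduct_transpose_mulVec, dotProduct_comm]
  have hzNz : z ⬝ᵥ (N *ᵥ z) = (P *ᵥ z) ⬝ᵥ (M *ᵥ (P *ᵥ z)) := by
    rw [← mulVec_mulVec, ← mulVec_mulVec, dotProduct_transpose_mulVec, dotProduct_comm]
  calc (Pᵀ *ᵥ x) ⬝ᵥ z = 2 * (z ⬝ᵥ (Pᵀ *ᵥ x)) - z ⬝ᵥ (N *ᵥ z) := by
        rw [hNz, dotProduct_comm]; ring
    _ = 2 * ((P *ᵥ z) ⬝ᵥ x) - (P *ᵥ z) ⬝ᵥ (M *ᵥ (P *ᵥ z)) := by rw [hzx, hzNz]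
    _ ≤ x ⬝ᵥ (M⁻¹ *ᵥ x) := hM.two_mul_dotProduct_sub_le x _

theorem submatrix_eq_transpose_mul_mul {R : Type*} [CommSemiring R] (M : Matrix n n R)
    (e : m → n) :
    M.submatrix e e
      = ((1 : Matrix n n R).submatrix id e)ᵀ * M * (1 : Matrix n n R).submatrix id e := by
  rw [transpose_submatrix, transpose_one]
  have hleft := one_submatrix_mul e (Equiv.refl n) M
  have hright := mul_submatrix_one (Equiv.refl n) e (M.submatrix e id)
  simp only [Equiv.coe_refl, Equiv.refl_symm] at hleft hright
  simp [hleft, hright]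

theorem transpose_one_submatrix_mulVec {R : Type*} [CommSemiring R] (e : m → n) (x : n → R) :
    ((1 : Matrix n n R).submatrix id e)ᵀ *ᵥ x = x ∘ e := by
  rw [transpose_submatrix, transpose_one]
  simpa using submatrix_mulVec_equiv (1 : Matrix n n R) x e (Equiv.refl n)

theorem PosDef.dotProduct_inv_submatrix_le [Fintype m] [DecidableEq m] {M : Matrix n n ℝ}
    (hM : M.PosDef) {e : m → n} (he : Function.Injective e) (x : n → ℝ) :
    (x ∘ e) ⬝ᵥ ((M.submatrix e e)⁻¹ *ᵥ (x ∘ e)) ≤ x ⬝ᵥ (M⁻¹ *ᵥ x) := by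
  have hdet : IsUnit (M.submatrix e e).det :=
    (isUnit_iff_isUnit_det _).1 (hM.submatrix he).isUnit
  rw [submatrix_eq_transpose_mul_mul] at hdet ⊢
  rw [← transpose_one_submatrix_mulVec]
  exact hM.dotProduct_inv_transpose_mul_mul_le _ hdet x

end Matrix

theorem mahalanobis_mono_principal_submatrix (p : ℕ) (S : Matrix (Fin p) (Fin p) ℝ)
    (hS : S.PosDef) (Δ : Fin p → ℝ) (A A' : Finset (Fin p)) (hAA : A' ⊆ A) :
    (fun i : A' => Δ i) ⬝ᵥ ((S.submatrix (fun i : A' => (i : Fin p)) (fun i : A' => (i : Fin p)))⁻¹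
        *ᵥ (fun i : A' => Δ i))
    ≤ (fun i : A => Δ i) ⬝ᵥ ((S.submatrix (fun i : A => (i : Fin p)) (fun i : A => (i : Fin p)))⁻¹
        *ᵥ (fun i : A => Δ i)) := by
  let incl : A' → A := fun i => ⟨i, hAA i.2⟩
  have hincl : Function.Injective incl :=
    Function.Injective.of_comp (f := Subtype.val) Subtype.val_injective
  exact (hS.submatrix Subtype.val_injective).dotProduct_inv_submatrix_le hincl (fun i : A => Δ i)
end

section
/- Cauchy interlacing for the product of inverses: let Σ_X and Σ_Y be p×p positive definite matrices, A' ⊆ A ⊆ {1,…,p} index sets with |A'| = d' ≤ |A| = d, and let γ_{A,1} ≥ … ≥ γ_{A,d} and γ_{A',1} ≥ … ≥ γ_{A',d'} be the eigenvalues of (Σ_{A,Y})⁻¹ Σ_{A,X} and (Σ_{A',Y})⁻¹ Σ_{A',X} respectively, where Σ_{A,·} denotes the principal submatrix indexed by A. Then γ_{A,i} ≥ γ_{A',i} for all 1 ≤ i ≤ d'. -/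
/-!
For symmetric `X` and positive definite `Y`, put `S = Y^{1/2}` and let `U` be an orthonormal
eigenbasis of `S⁻¹ X S⁻¹`; then `M = S⁻¹ U` satisfies `Mᵀ Y M = 1`, `Mᵀ X M = diag μ`, and `μ` is
the spectrum of `Y⁻¹ X`. In the coordinates `x = Mᵀ Y u` the two quadratic forms are `∑ μᵢ xᵢ²`
and `∑ xᵢ²`, which gives both halves of a Courant–Fischer principle for the generalised Rayleigh
quotient `uᵀ X u / uᵀ Y u`: every subspace of dimension `k + 1` contains a nonzero vector with
quotient `≤ γₖ`, and some subspace of dimension `k + 1` has all quotients `≥ γₖ`. Extending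
vectors on `A'` by zero to `A` preserves both quadratic forms, so the second half for `A'` and the
first half for `A` meet in a vector with `γ_{A',k} ≤ quotient ≤ γ_{A,k}`.
-/

open Matrix Polynomial

section Counting

open Finset

variable {ι κ R : Type*} [Fintype ι] [Fintype κ] {μ : ι → R} {γ : κ → R}

theorem Polynomial.map_univ_val_eq_of_prod_X_sub_C_eq [CommRing R] [IsDomain R]
    (h : ∏ i, (X - C (μ i)) = ∏ j, (X - C (γ j))) : univ.val.map μ = univ.val.map γ := by
  rw [← roots_multiset_prod_X_sub_C (univ.val.map μ),
    ← roots_multiset_prod_X_sub_C (univ.val.map γ), Multiset.map_map, Multiset.map_map]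
  exact congrArg roots h

theorem Finset.card_filter_eq_of_map_univ_val_eq (h : univ.val.map μ = univ.val.map γ)
    (p : R → Prop) [DecidablePred p] : #{i | p (μ i)} = #{j | p (γ j)} := by
  have := congrArg (Multiset.countP p) h
  rwa [Multiset.countP_map, Multiset.countP_map] at this

theorem Fintype.card_eq_of_map_univ_val_eq (h : univ.val.map μ = univ.val.map γ) :
    Fintype.card ι = Fintype.card κ := by
  simpa using congrArg Multiset.card h

variable {α : Type*} [LinearOrder α] {n : ℕ} {f : Fin n → α}

theorem Antitone.card_filter_apply_lt_le (hf : Antitone f) (k : Fin n) :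
    #{j | f k < f j} ≤ k := by
  calc #{j | f k < f j} ≤ #(Iio k) :=
        card_le_card fun j hj => mem_Iio.mpr <| lt_of_not_ge fun hkj =>
          not_lt_of_ge (hf hkj) (mem_filter.mp hj).2
    _ = k := Fin.card_Iio k

theorem Antitone.card_filter_lt_apply_add_le (hf : Antitone f) (k : Fin n) :
    #{j | f j < f k} + k + 1 ≤ n := by
  have : #{j | f j < f k} ≤ #(Ioi k) :=
    card_le_card fun j hj => mem_Ioi.mpr <| lt_of_not_ge fun hjk =>
      not_lt_of_ge (hf hjk) (mem_filter.mp hj).2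
  rw [Fin.card_Ioi] at this
  omega

end Counting

namespace Matrix

open Finset Function _root_.Module

section ExtendByZero

variable {ι κ R : Type*} [Fintype ι] [Fintype κ] [Semiring R] {g : κ → ι}

theorem extend_zero_dotProduct (hg : Injective g) (x : κ → R) (v : ι → R) :
    extend g x 0 ⬝ᵥ v = x ⬝ᵥ (v ∘ g) := by
  refine (Fintype.sum_of_injective g hg _ _ (fun j hj => ?_) fun i => ?_).symm
  · rw [extend_apply' _ _ _ hj, Pi.zero_apply, zero_mul]
  · rw [hg.extend_apply, Function.comp_apply]

theorem dotProduct_extend_zero (hg : Injective g) (v : ι → R) (x : κ → R) :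
    v ⬝ᵥ extend g x 0 = (v ∘ g) ⬝ᵥ x := by
  refine (Fintype.sum_of_injective g hg _ _ (fun j hj => ?_) fun i => ?_).symm
  · rw [extend_apply' _ _ _ hj, Pi.zero_apply, mul_zero]
  · rw [hg.extend_apply, Function.comp_apply]

theorem extendByZero_dotProduct_mulVec_extendByZero (hg : Injective g) (M : Matrix ι ι R)
    (x : κ → R) :
    ExtendByZero.linearMap R g x ⬝ᵥ (M *ᵥ ExtendByZero.linearMap R g x) =
      x ⬝ᵥ (M.submatrix g g *ᵥ x) := by
  change extend g x 0 ⬝ᵥ (M *ᵥ extend g x 0) = _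
  rw [extend_zero_dotProduct hg]
  congr 1
  ext a
  exact dotProduct_extend_zero hg (M (g a)) x

end ExtendByZero

theorem mulVec_dotProduct_mulVec_mulVec {ι κ R : Type*} [Fintype ι] [Fintype κ]
    [CommSemiring R] (A : Matrix ι ι R) (M : Matrix ι κ R) (x : κ → R) :
    M *ᵥ x ⬝ᵥ (A *ᵥ (M *ᵥ x)) = x ⬝ᵥ ((Mᵀ * A * M) *ᵥ x) := by
  rw [mulVec_mulVec, dotProduct_mulVec, vecMul_mulVec, ← dotProduct_mulVec, Matrix.mul_assoc]

section SimultaneousDiagonalization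

variable {ι : Type*} [Fintype ι] [DecidableEq ι] {A B M : Matrix ι ι ℝ} {μ : ι → ℝ}

open scoped MatrixOrder in
theorem exists_transpose_mul_mul_eq_one_and_diagonal (hA : A.IsHermitian) (hB : B.PosDef) :
    ∃ (M : Matrix ι ι ℝ) (μ : ι → ℝ), Mᵀ * B * M = 1 ∧ Mᵀ * A * M = diagonal μ := by
  obtain ⟨S, hS, rfl⟩ : ∃ S : Matrix ι ι ℝ, S.PosDef ∧ B = S * S :=
    ⟨CFC.sqrt B, hB.isStrictlyPositive.sqrt.posDef,
      (CFC.sqrt_mul_sqrt_self B hB.posSemidef.nonneg).symm⟩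
  have hSt : (S⁻¹)ᵀ = S⁻¹ := by
    rw [transpose_nonsing_inv, ← conjTranspose_eq_transpose_of_trivial, hS.isHermitian.eq]
  have hH : (S⁻¹ * A * S⁻¹).IsHermitian := by
    simpa only [conjTranspose_eq_transpose_of_trivial, hSt] using
      isHermitian_conjTranspose_mul_mul S⁻¹ hA
  set U : Matrix ι ι ℝ := ↑hH.eigenvectorUnitary
  have hUt : Uᵀ = star U := (conjTranspose_eq_transpose_of_trivial U).symm
  refine ⟨S⁻¹ * U, hH.eigenvalues, ?_, ?_⟩
  · rw [transpose_mul, hSt, hUt]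
    have hSu : IsUnit S.det := (isUnit_iff_isUnit_det S).mp hS.isUnit
    simp only [Matrix.mul_assoc, nonsing_inv_mul_cancel_left _ _ hSu,
      mul_nonsing_inv_cancel_left _ _ hSu]
    exact Unitary.coe_star_mul_self hH.eigenvectorUnitary
  · have hdiag : star U * (S⁻¹ * A * S⁻¹) * U = diagonal hH.eigenvalues := by
      simpa using hH.conjStarAlgAut_star_eigenvectorUnitary
    rw [transpose_mul, hSt, hUt, ← hdiag]
    simp only [Matrix.mul_assoc]

theorem charpoly_inv_mul_eq_prod (hB : Mᵀ * B * M = 1) (hA : Mᵀ * A * M = diagonal μ) :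
    (B⁻¹ * A).charpoly = ∏ i, (X - C (μ i)) := by
  have hinv : B⁻¹ = M * Mᵀ := by
    refine inv_eq_left_inv ?_
    rw [Matrix.mul_assoc, mul_eq_one_comm, hB]
  rw [hinv, Matrix.mul_assoc, charpoly_mul_comm, hA, charpoly_diagonal]

theorem dotProduct_mulVec_eq_sum_mul_sq (hB : Mᵀ * B * M = 1) (hA : Mᵀ * A * M = diagonal μ)
    (u : ι → ℝ) : u ⬝ᵥ (A *ᵥ u) = ∑ i, μ i * ((Mᵀ * B) *ᵥ u) i ^ 2 := by
  have hu : M *ᵥ ((Mᵀ * B) *ᵥ u) = u := by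
    rw [mulVec_mulVec, mul_eq_one_comm.mpr hB, one_mulVec]
  conv_lhs => rw [← hu, mulVec_dotProduct_mulVec_mulVec, hA]
  simp only [dotProduct, mulVec_diagonal]
  exact sum_congr rfl fun i _ => by ring

theorem dotProduct_mulVec_eq_sum_sq (hB : Mᵀ * B * M = 1) (u : ι → ℝ) :
    u ⬝ᵥ (B *ᵥ u) = ∑ i, ((Mᵀ * B) *ᵥ u) i ^ 2 := by
  simpa only [one_mul] using
    dotProduct_mulVec_eq_sum_mul_sq hB (hB.trans diagonal_one.symm) u

theorem exists_ne_zero_dotProduct_mulVec_le_mul (hB : Mᵀ * B * M = 1)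
    (hA : Mᵀ * A * M = diagonal μ) {V : Type*} [AddCommGroup V] [Module ℝ V]
    [FiniteDimensional ℝ V] (φ : V →ₗ[ℝ] ι → ℝ) (c : ℝ) (hV : #{i | c < μ i} < finrank ℝ V) :
    ∃ v ≠ 0, φ v ⬝ᵥ (A *ᵥ φ v) ≤ c * (φ v ⬝ᵥ (B *ᵥ φ v)) := by
  set f := LinearMap.funLeft ℝ ℝ (Subtype.val : {i // c < μ i} → ι) ∘ₗ
    (Mᵀ * B).mulVecLin ∘ₗ φ
  have hf : finrank ℝ ({i // c < μ i} → ℝ) < finrank ℝ V := by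
    rwa [Module.finrank_fintype_fun_eq_card, Fintype.card_subtype]
  obtain ⟨v, hv, hv0⟩ :=
    Submodule.exists_mem_ne_zero_of_ne_bot (LinearMap.ker_ne_bot_of_finrank_lt hf)
  have hx (i : ι) (hi : c < μ i) : ((Mᵀ * B) *ᵥ φ v) i = 0 :=
    congrFun (LinearMap.mem_ker.mp hv : f v = 0) ⟨i, hi⟩
  refine ⟨v, hv0, ?_⟩
  rw [dotProduct_mulVec_eq_sum_mul_sq hB hA, dotProduct_mulVec_eq_sum_sq hB, mul_sum]
  refine sum_le_sum fun i _ => ?_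
  rcases le_or_gt (μ i) c with h | h
  · exact mul_le_mul_of_nonneg_right h (sq_nonneg _)
  · simp [hx i h]

theorem exists_forall_mul_le_dotProduct_mulVec (hB : Mᵀ * B * M = 1)
    (hA : Mᵀ * A * M = diagonal μ) (c : ℝ) :
    ∃ W : Submodule ℝ (ι → ℝ), Fintype.card ι ≤ finrank ℝ W + #{i | μ i < c} ∧
      ∀ u ∈ W, c * (u ⬝ᵥ (B *ᵥ u)) ≤ u ⬝ᵥ (A *ᵥ u) := by
  set f := LinearMap.funLeft ℝ ℝ (Subtype.val : {i // μ i < c} → ι) ∘ₗ (Mᵀ * B).mulVecLin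
  refine ⟨LinearMap.ker f, ?_, fun u hu => ?_⟩
  · have hrank := f.finrank_range_add_finrank_ker
    have hrange := (LinearMap.range f).finrank_le
    rw [finrank_fintype_fun_eq_card] at hrank
    rw [finrank_fintype_fun_eq_card, Fintype.card_subtype] at hrange
    omega
  · have hx (i : ι) (hi : μ i < c) : ((Mᵀ * B) *ᵥ u) i = 0 :=
      congrFun (LinearMap.mem_ker.mp hu : f u = 0) ⟨i, hi⟩
    rw [dotProduct_mulVec_eq_sum_mul_sq hB hA, dotProduct_mulVec_eq_sum_sq hB, mul_sum]
    refine sum_le_sum fun i _ => ?_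
    rcases le_or_gt c (μ i) with h | h
    · exact mul_le_mul_of_nonneg_right h (sq_nonneg _)
    · simp [hx i h]

variable {n : ℕ} {γ : Fin n → ℝ}

theorem exists_ne_zero_dotProduct_mulVec_le_mul_of_charpoly (hA : A.IsHermitian) (hB : B.PosDef)
    (hγ : Antitone γ) (hchar : (B⁻¹ * A).charpoly = ∏ j, (X - C (γ j))) (k : Fin n)
    {V : Type*} [AddCommGroup V] [Module ℝ V] [FiniteDimensional ℝ V] (φ : V →ₗ[ℝ] ι → ℝ)
    (hV : k < finrank ℝ V) :
    ∃ v ≠ 0, φ v ⬝ᵥ (A *ᵥ φ v) ≤ γ k * (φ v ⬝ᵥ (B *ᵥ φ v)) := by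
  obtain ⟨M, μ, hBM, hAM⟩ := exists_transpose_mul_mul_eq_one_and_diagonal hA hB
  have hμγ := map_univ_val_eq_of_prod_X_sub_C_eq
    ((charpoly_inv_mul_eq_prod hBM hAM).symm.trans hchar)
  refine exists_ne_zero_dotProduct_mulVec_le_mul hBM hAM φ _ ?_
  rw [card_filter_eq_of_map_univ_val_eq hμγ (γ k < ·)]
  exact (hγ.card_filter_apply_lt_le k).trans_lt hV

theorem exists_forall_mul_le_dotProduct_mulVec_of_charpoly (hA : A.IsHermitian) (hB : B.PosDef)
    (hγ : Antitone γ) (hchar : (B⁻¹ * A).charpoly = ∏ j, (X - C (γ j))) (k : Fin n) :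
    ∃ W : Submodule ℝ (ι → ℝ), k + 1 ≤ finrank ℝ W ∧
      ∀ u ∈ W, γ k * (u ⬝ᵥ (B *ᵥ u)) ≤ u ⬝ᵥ (A *ᵥ u) := by
  obtain ⟨M, μ, hBM, hAM⟩ := exists_transpose_mul_mul_eq_one_and_diagonal hA hB
  have hμγ := map_univ_val_eq_of_prod_X_sub_C_eq
    ((charpoly_inv_mul_eq_prod hBM hAM).symm.trans hchar)
  obtain ⟨W, hW, hWle⟩ := exists_forall_mul_le_dotProduct_mulVec hBM hAM (γ k)
  refine ⟨W, ?_, hWle⟩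
  rw [card_filter_eq_of_map_univ_val_eq hμγ (· < γ k), Fintype.card_eq_of_map_univ_val_eq hμγ,
    Fintype.card_fin] at hW
  have := hγ.card_filter_lt_apply_add_le k
  omega

end SimultaneousDiagonalization

end Matrix

theorem interlacing_inv_mul_principal_submatrices (p : ℕ)
    (SX SY : Matrix (Fin p) (Fin p) ℝ) (hX : SX.PosDef) (hY : SY.PosDef)
    (A A' : Finset (Fin p)) (hAA : A' ⊆ A)
    (γA : Fin A.card → ℝ) (γA' : Fin A'.card → ℝ)
    (hordA : Antitone γA) (hordA' : Antitone γA')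
    (hcharA : ((SY.submatrix (fun i : A => (i : Fin p)) (fun i : A => (i : Fin p)))⁻¹ *
        (SX.submatrix (fun i : A => (i : Fin p)) (fun i : A => (i : Fin p)))).charpoly
        = ∏ i, (X - C (γA ((Fintype.equivFinOfCardEq  (Fintype.card_coe _)) i)))
        )
    (hcharA' : ((SY.submatrix (fun i : A' => (i : Fin p)) (fun i : A' => (i : Fin p)))⁻¹ *
        (SX.submatrix (fun i : A' => (i : Fin p)) (fun i : A' => (i : Fin p)))).charpoly
        = ∏ i, (X - C (γA' ((Fintype.equivFinOfCardEq  (Fintype.card_coe _)) i)))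
        ) :
    ∀ i : Fin A'.card, γA' i ≤ γA (Fin.castLE (Finset.card_le_card hAA) i) := by
  intro k
  set e : A' ↪ A := Subtype.impEmbedding _ _ fun _ h => hAA h
  obtain ⟨W, hW, hlow⟩ := exists_forall_mul_le_dotProduct_mulVec_of_charpoly
    (hX.submatrix Subtype.val_injective).isHermitian (hY.submatrix Subtype.val_injective) hordA'
    (hcharA'.trans (Equiv.prod_comp _ fun j => X - C (γA' j))) k
  obtain ⟨v, hv0, hup⟩ := exists_ne_zero_dotProduct_mulVec_le_mul_of_charpoly
    (hX.submatrix Subtype.val_injective).isHermitian (hY.submatrix Subtype.val_injective) hordA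
    (hcharA.trans (Equiv.prod_comp _ fun j => X - C (γA j)))
    (Fin.castLE (Finset.card_le_card hAA) k)
    (Function.ExtendByZero.linearMap ℝ e ∘ₗ W.subtype) (by simpa using hW)
  simp only [LinearMap.comp_apply, Submodule.subtype_apply] at hup
  rw [extendByZero_dotProduct_mulVec_extendByZero e.injective,
    extendByZero_dotProduct_mulVec_extendByZero e.injective] at hup
  have hpos : 0 < (v : A' → ℝ) ⬝ᵥ (SY.submatrix Subtype.val Subtype.val *ᵥ (v : A' → ℝ)) := by
    simpa using (hY.submatrix Subtype.val_injective).dotProduct_mulVec_pos (by simpa using hv0)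
  exact le_of_mul_le_mul_right ((hlow v v.2).trans hup) hpos
end

section
/- Monotonicity of the local Gaussian KL divergence: let Σ_X, Σ_Y be p×p positive definite matrices and Δ ∈ ℝ^p. For an index set A ⊆ {1,…,p}, define KL_A = (1/2)(tr((Σ_{A,Y})⁻¹ Σ_{A,X}) - |A| + Δ_Aᵀ (Σ_{A,Y})⁻¹ Δ_A + ln(det Σ_{A,Y} / det Σ_{A,X})), where Σ_{A,·} and Δ_A are the principal submatrix and subvector indexed by A. Suppose A' ⊆ A and all eigenvalues of (Σ_{A',Y})⁻¹ Σ_{A',X} are at least 1. Then KL_{A'} ≤ KL_A. -/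
open Matrix

/-- Local Gaussian KL divergence on the coordinates indexed by `A`. -/
noncomputable def localKL {p : ℕ} (SX SY : Matrix (Fin p) (Fin p) ℝ) (Δ : Fin p → ℝ)
    (A : Finset (Fin p)) : ℝ :=
  (1/2) * (Matrix.trace ((SY.submatrix (fun i : A => (i : Fin p)) (fun i : A => (i : Fin p)))⁻¹ *
      (SX.submatrix (fun i : A => (i : Fin p)) (fun i : A => (i : Fin p))))
    - A.card
    + (fun i : A => Δ i) ⬝ᵥ
        ((SY.submatrix (fun i : A => (i : Fin p)) (fun i : A => (i : Fin p)))⁻¹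
          *ᵥ (fun i : A => Δ i))
    + Real.log ((SY.submatrix (fun i : A => (i : Fin p)) (fun i : A => (i : Fin p))).det /
        (SX.submatrix (fun i : A => (i : Fin p)) (fun i : A => (i : Fin p))).det))

/-!
Split the coordinates of `A` as `A' ⊕ (A \ A')` and write `X₁₁`, `Y₁₁` for the `A'`-blocks of
`Σ_X`, `Σ_Y`. The mean term can only grow: `vᵀ Y⁻¹ v` is the supremum of `2 xᵀv - xᵀ Y x`, and
restricting `x` to the first block gives the marginal term. For the spectral terms put
`M = Y⁻¹ - diag(Y₁₁⁻¹ - X₁₁⁻¹, 0)`. Then `M` is positive definite, and the increase of the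
spectral part is `tr (M X) - |A| - log det (M X)`, which is nonnegative by `x - 1 - log x ≥ 0`
applied to the eigenvalues of a positive definite matrix similar to `M X`.
-/

namespace Matrix

variable {n : Type*} [Fintype n] [DecidableEq n]

theorem PosDef.card_add_log_det_le_trace {Z : Matrix n n ℝ} (hZ : Z.PosDef) :
    (Fintype.card n : ℝ) + Real.log Z.det ≤ Z.trace := by
  have hpos := hZ.eigenvalues_pos
  rw [hZ.1.trace_eq_sum_eigenvalues, hZ.1.det_eq_prod_eigenvalues]
  simp only [RCLike.ofReal_real_eq_id, id]
  rw [Real.log_prod fun i _ => (hpos i).ne', ← nsmul_one, ← Finset.card_univ, ← Finset.sum_const,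
    ← Finset.sum_add_distrib]
  exact Finset.sum_le_sum fun i _ => by linarith [Real.log_le_sub_one_of_pos (hpos i)]

open scoped MatrixOrder in
/-- Writing `X = Bᴴ B`, the product `M X` has the trace and determinant of the positive definite
matrix `B M Bᴴ`. -/
theorem PosDef.card_add_log_det_mul_le_trace_mul {M X : Matrix n n ℝ} (hM : M.PosDef)
    (hX : X.PosDef) : (Fintype.card n : ℝ) + Real.log (M.det * X.det) ≤ (M * X).trace := by
  obtain ⟨B, rfl⟩ := CStarAlgebra.nonneg_iff_eq_star_mul_self.mp hX.posSemidef.nonneg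
  have hB : IsUnit B := by
    rw [isUnit_iff_isUnit_det, isUnit_iff_ne_zero]
    intro h
    simpa [star_eq_conjTranspose, h] using hX.det_pos.ne'
  have hBMB : (B * M * Bᴴ).PosDef :=
    hM.mul_mul_conjTranspose_same (vecMul_injective_iff_isUnit.2 hB)
  have htr : (M * (star B * B)).trace = (B * M * Bᴴ).trace := by
    rw [star_eq_conjTranspose, ← Matrix.mul_assoc, trace_mul_comm, Matrix.mul_assoc]
  have hdet : M.det * (star B * B).det = (B * M * Bᴴ).det := by
    simp only [star_eq_conjTranspose, det_mul]
    ring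
  rw [htr, hdet]
  exact hBMB.card_add_log_det_le_trace

/-- The variational formula `vᵀ M⁻¹ v = max_x (2 xᵀv - xᵀ M x)`, inequality half. -/
theorem PosDef.two_mul_dotProduct_sub_le_dotProduct_inv_mulVec {M : Matrix n n ℝ}
    (hM : M.PosDef) (x v : n → ℝ) :
    2 * (x ⬝ᵥ v) - x ⬝ᵥ (M *ᵥ x) ≤ v ⬝ᵥ (M⁻¹ *ᵥ v) := by
  set w := M⁻¹ *ᵥ v
  have hMw : M *ᵥ w = v := by
    rw [mulVec_mulVec, mul_nonsing_inv _ hM.det_pos.ne'.isUnit, one_mulVec]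
  have hMT : Mᵀ = M := by simpa using hM.isHermitian.eq
  have hwMx : w ⬝ᵥ (M *ᵥ x) = x ⬝ᵥ v := by
    rw [dotProduct_mulVec, ← mulVec_transpose, hMT, hMw, dotProduct_comm]
  have hsq := hM.posSemidef.dotProduct_mulVec_nonneg (x - w)
  rw [star_trivial, mulVec_sub, hMw, sub_dotProduct, dotProduct_sub, dotProduct_sub, hwMx,
    dotProduct_comm w v] at hsq
  linarith

section Blocks

variable {α β R : Type*} [Fintype α] [Fintype β]

theorem dotProduct_fromBlocks_zero_mulVec [CommSemiring R] (W : Matrix α α R)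
    (z : α ⊕ β → R) :
    z ⬝ᵥ (fromBlocks W 0 0 0 *ᵥ z) = (z ∘ Sum.inl) ⬝ᵥ (W *ᵥ (z ∘ Sum.inl)) := by
  simp [dotProduct, Fintype.sum_sum_type, fromBlocks_mulVec]

theorem trace_fromBlocks_zero_mul [CommSemiring R] (W : Matrix α α R)
    (X : Matrix (α ⊕ β) (α ⊕ β) R) :
    (fromBlocks W 0 0 0 * X).trace = (W * X.toBlocks₁₁).trace := by
  conv_lhs => rw [← fromBlocks_toBlocks X]
  simp [fromBlocks_multiply, trace, Fintype.sum_sum_type]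

variable [DecidableEq α] [DecidableEq β]

theorem det_one_sub_mul_fromBlocks_zero [CommRing R] (Y : Matrix (α ⊕ β) (α ⊕ β) R)
    (W : Matrix α α R) : (1 - Y * fromBlocks W 0 0 0).det = (1 - Y.toBlocks₁₁ * W).det := by
  conv_lhs => rw [← fromBlocks_toBlocks Y]
  rw [fromBlocks_multiply, ← fromBlocks_one, sub_eq_add_neg, fromBlocks_neg, fromBlocks_add]
  simp [sub_eq_add_neg]

theorem det_mul_det_inv_sub_fromBlocks {K : Type*} [Field K] {Y : Matrix (α ⊕ β) (α ⊕ β) K}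
    (hY : IsUnit Y.det) (hY₁₁ : IsUnit Y.toBlocks₁₁.det) (P : Matrix α α K) :
    Y.det * (Y⁻¹ - fromBlocks (Y.toBlocks₁₁⁻¹ - P⁻¹) 0 0 0).det = Y.toBlocks₁₁.det / P.det := by
  rw [← det_mul, Matrix.mul_sub, mul_nonsing_inv _ hY, det_one_sub_mul_fromBlocks_zero,
    Matrix.mul_sub, mul_nonsing_inv _ hY₁₁, sub_sub_cancel, det_mul, det_nonsing_inv,
    Ring.inverse_eq_inv', div_eq_mul_inv]

theorem PosDef.dotProduct_toBlocks₁₁_inv_mulVec_le {Y : Matrix (α ⊕ β) (α ⊕ β) ℝ}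
    (hY : Y.PosDef) (z : α ⊕ β → ℝ) :
    (z ∘ Sum.inl) ⬝ᵥ (Y.toBlocks₁₁⁻¹ *ᵥ (z ∘ Sum.inl)) ≤ z ⬝ᵥ (Y⁻¹ *ᵥ z) := by
  set A := Y.toBlocks₁₁
  have hA : A.PosDef := hY.submatrix Sum.inl_injective
  set x := A⁻¹ *ᵥ (z ∘ Sum.inl)
  have hAx : A *ᵥ x = z ∘ Sum.inl := by
    rw [mulVec_mulVec, mul_nonsing_inv _ hA.det_pos.ne'.isUnit, one_mulVec]
  have key := hY.two_mul_dotProduct_sub_le_dotProduct_inv_mulVec (Sum.elim x 0) z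
  have hlin : Sum.elim x 0 ⬝ᵥ z = x ⬝ᵥ (z ∘ Sum.inl) := by
    simp [dotProduct, Fintype.sum_sum_type]
  have hquad : Sum.elim x 0 ⬝ᵥ (Y *ᵥ Sum.elim x 0) = x ⬝ᵥ (A *ᵥ x) := by
    conv_lhs => rw [← fromBlocks_toBlocks Y]
    simp [dotProduct, Fintype.sum_sum_type, fromBlocks_mulVec, A]
  rw [hlin, hquad, hAx, dotProduct_comm] at key
  linarith

/-- The quadratic form of this matrix is `(zᵀ Y⁻¹ z - z₁ᵀ Y₁₁⁻¹ z₁) + z₁ᵀ P⁻¹ z₁`, a sum of two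
nonnegative terms. -/
theorem PosDef.inv_sub_fromBlocks {Y : Matrix (α ⊕ β) (α ⊕ β) ℝ} {P : Matrix α α ℝ}
    (hY : Y.PosDef) (hP : P.PosDef) :
    (Y⁻¹ - fromBlocks (Y.toBlocks₁₁⁻¹ - P⁻¹) 0 0 0).PosDef := by
  have hA : Y.toBlocks₁₁.PosDef := hY.submatrix Sum.inl_injective
  have hpsd : (Y⁻¹ - fromBlocks (Y.toBlocks₁₁⁻¹ - P⁻¹) 0 0 0).PosSemidef := by
    refine .of_dotProduct_mulVec_nonneg ?_ fun z => ?_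
    · exact hY.inv.1.sub ((hA.inv.1.sub hP.inv.1).fromBlocks (by simp) (by simp))
    · rw [star_trivial, sub_mulVec, dotProduct_sub, dotProduct_fromBlocks_zero_mulVec,
        sub_mulVec, dotProduct_sub]
      have := hP.inv.posSemidef.dotProduct_mulVec_nonneg (z ∘ Sum.inl)
      rw [star_trivial] at this
      linarith [hY.dotProduct_toBlocks₁₁_inv_mulVec_le z]
  refine hpsd.posDef_iff_det_ne_zero.2 fun h => ?_
  have hdet := det_mul_det_inv_sub_fromBlocks hY.det_pos.ne'.isUnit hA.det_pos.ne'.isUnit P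
  rw [h, mul_zero] at hdet
  exact (div_pos hA.det_pos hP.det_pos).ne' hdet.symm

end Blocks

end Matrix

/-- `KL(𝒩(0, X) ‖ 𝒩(Δ, Y))`. -/
noncomputable def gaussianKL {n : Type*} [Fintype n] [DecidableEq n] (X Y : Matrix n n ℝ)
    (Δ : n → ℝ) : ℝ :=
  (1/2) * ((Y⁻¹ * X).trace - Fintype.card n + Δ ⬝ᵥ (Y⁻¹ *ᵥ Δ) + Real.log (Y.det / X.det))

section gaussianKL

variable {m n : Type*} [Fintype m] [Fintype n] [DecidableEq m] [DecidableEq n]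

theorem gaussianKL_submatrix_equiv (X Y : Matrix n n ℝ) (Δ : n → ℝ) (e : m ≃ n) :
    gaussianKL (X.submatrix e e) (Y.submatrix e e) (Δ ∘ e) = gaussianKL X Y Δ := by
  have htr : ((Y⁻¹ * X).submatrix e e).trace = (Y⁻¹ * X).trace :=
    e.sum_comp fun i => (Y⁻¹ * X) i i
  have hquad : (Δ ∘ e) ⬝ᵥ ((Y⁻¹.submatrix e e) *ᵥ (Δ ∘ e)) = Δ ⬝ᵥ (Y⁻¹ *ᵥ Δ) := by
    rw [submatrix_mulVec_equiv, ← comp_equiv_symm_dotProduct]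
    simp [Function.comp_def]
  rw [gaussianKL, gaussianKL, inv_submatrix_equiv, submatrix_mul_equiv, htr, hquad,
    Fintype.card_congr e, det_submatrix_equiv_self, det_submatrix_equiv_self]

theorem gaussianKL_toBlocks₁₁_le {α β : Type*} [Fintype α] [Fintype β] [DecidableEq α]
    [DecidableEq β] {X Y : Matrix (α ⊕ β) (α ⊕ β) ℝ} (hX : X.PosDef) (hY : Y.PosDef)
    (Δ : α ⊕ β → ℝ) :
    gaussianKL X.toBlocks₁₁ Y.toBlocks₁₁ (Δ ∘ Sum.inl) ≤ gaussianKL X Y Δ := by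
  set P := X.toBlocks₁₁
  set A := Y.toBlocks₁₁
  have hP : P.PosDef := hX.submatrix Sum.inl_injective
  have hA : A.PosDef := hY.submatrix Sum.inl_injective
  set M := Y⁻¹ - fromBlocks (A⁻¹ - P⁻¹) 0 0 0
  have hM : M.PosDef := hY.inv_sub_fromBlocks hP
  have hdet : Y.det * M.det = A.det / P.det :=
    det_mul_det_inv_sub_fromBlocks hY.det_pos.ne'.isUnit hA.det_pos.ne'.isUnit P
  have htr : (M * X).trace = (Y⁻¹ * X).trace - (A⁻¹ * P).trace + Fintype.card α := by
    rw [Matrix.sub_mul, trace_sub, trace_fromBlocks_zero_mul, Matrix.sub_mul, trace_sub,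
      nonsing_inv_mul _ hP.det_pos.ne'.isUnit, trace_one]
    ring
  have hlog : Real.log Y.det + Real.log M.det = Real.log A.det - Real.log P.det := by
    rw [← Real.log_mul hY.det_pos.ne' hM.det_pos.ne', hdet,
      Real.log_div hA.det_pos.ne' hP.det_pos.ne']
  have hcore := hM.card_add_log_det_mul_le_trace_mul hX
  have hquad := hY.dotProduct_toBlocks₁₁_inv_mulVec_le Δ
  rw [Real.log_mul hM.det_pos.ne' hX.det_pos.ne', htr, Fintype.card_sum, Nat.cast_add] at hcore
  rw [gaussianKL, gaussianKL, Real.log_div hA.det_pos.ne' hP.det_pos.ne',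
    Real.log_div hY.det_pos.ne' hX.det_pos.ne', Fintype.card_sum, Nat.cast_add]
  linarith

theorem gaussianKL_submatrix_le {X Y : Matrix n n ℝ} (hX : X.PosDef) (hY : Y.PosDef)
    (Δ : n → ℝ) {f : m → n} (hf : Function.Injective f) :
    gaussianKL (X.submatrix f f) (Y.submatrix f f) (Δ ∘ f) ≤ gaussianKL X Y Δ := by
  classical
  let e : m ⊕ {j // j ∉ Set.range f} ≃ n :=
    (Equiv.sumCongr (Equiv.ofInjective f hf) (Equiv.refl _)).trans (Equiv.sumCompl _)
  calc gaussianKL (X.submatrix f f) (Y.submatrix f f) (Δ ∘ f)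
      = gaussianKL (X.submatrix e e).toBlocks₁₁ (Y.submatrix e e).toBlocks₁₁
          ((Δ ∘ e) ∘ Sum.inl) := rfl
    _ ≤ gaussianKL (X.submatrix e e) (Y.submatrix e e) (Δ ∘ e) :=
        gaussianKL_toBlocks₁₁_le (hX.submatrix e.injective) (hY.submatrix e.injective) _
    _ = gaussianKL X Y Δ := gaussianKL_submatrix_equiv X Y Δ e

end gaussianKL

theorem localKL_eq_gaussianKL {p : ℕ} (SX SY : Matrix (Fin p) (Fin p) ℝ) (Δ : Fin p → ℝ)
    (A : Finset (Fin p)) :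
    localKL SX SY Δ A = gaussianKL (SX.submatrix (↑) (↑)) (SY.submatrix (↑) (↑))
      (fun i : A => Δ i) := by
  rw [gaussianKL, Fintype.card_coe]
  rfl

theorem localKL_monotone_general (p : ℕ) (SX SY : Matrix (Fin p) (Fin p) ℝ) (Δ : Fin p → ℝ)
    (hX : SX.PosDef) (hY : SY.PosDef) (A A' : Finset (Fin p)) (hAA : A' ⊆ A) :
    localKL SX SY Δ A' ≤ localKL SX SY Δ A := by
  rw [localKL_eq_gaussianKL, localKL_eq_gaussianKL]
  exact gaussianKL_submatrix_le (hX.submatrix Subtype.val_injective)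
    (hY.submatrix Subtype.val_injective) (fun i : A => Δ i)
    (f := fun i : A' => (⟨i, hAA i.2⟩ : A)) fun _ _ h => Subtype.ext (Subtype.mk.inj h)

theorem localKL_monotone (p : ℕ) (SX SY : Matrix (Fin p) (Fin p) ℝ) (Δ : Fin p → ℝ)
    (hX : SX.PosDef) (hY : SY.PosDef) (A A' : Finset (Fin p)) (hAA : A' ⊆ A)
    (heig : ∀ γ ∈ spectrum ℝ
      ((SY.submatrix (fun i : A' => (i : Fin p)) (fun i : A' => (i : Fin p)))⁻¹ *
       (SX.submatrix (fun i : A' => (i : Fin p)) (fun i : A' => (i : Fin p)))), 1 ≤ γ) :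
    localKL SX SY Δ A' ≤ localKL SX SY Δ A :=
  localKL_monotone_general p SX SY Δ hX hY A A' hAA
end
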